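/- Let V, W be real vector spaces, a : V × V → ℝ a bilinear form with a(v,v) = |||v|||²_V where |||·|||_V is a norm on V, b : V × W → ℝ bilinear with |b(v,q)| ≤ C|||v|||_V ‖q‖ for a norm ‖·‖ on W, and c : W × W → ℝ bilinear with c(q,q) = |||q|||²_W ≥ 0. Suppose for each Δt > 0 the pair (u,p) ∈ V × W satisfies a(u,v) − b(v,p) = 0 for all v ∈ V and −b(u,q) − Δt·c(p,q) = 0 for all q ∈ W. If additionally the inf-sup condition sup_{v≠0} b(v,p)/|||v|||_V ≥ α‖p‖ holds with α > 0, then u = 0 and p = 0. -/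
import Mathlib

theorem stmt5 {V W : Type*} [AddCommGroup V] [Module ℝ V] [AddCommGroup W] [Module ℝ W]
    (a : V →ₗ[ℝ] V →ₗ[ℝ] ℝ) (b : V →ₗ[ℝ] W →ₗ[ℝ] ℝ) (c : W →ₗ[ℝ] W →ₗ[ℝ] ℝ)
    (nV : V → ℝ) (nW nWsemi : W → ℝ)
    (hnV_nonneg : ∀ v, 0 ≤ nV v) (hnW_nonneg : ∀ q, 0 ≤ nW q)
    (ha : ∀ v, a v v = (nV v) ^ 2)
    (hnV_norm : ∀ v, nV v = 0 → v = 0)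
    (hnW_norm : ∀ q, nW q = 0 → q = 0)
    (C : ℝ) (hb : ∀ v q, |b v q| ≤ C * nV v * nW q)
    (hc : ∀ q, c q q = (nWsemi q) ^ 2)
    (α : ℝ) (hα : 0 < α)
    (hinfsup : ∀ q : W, ∃ v : V, nV v ≤ 1 ∧ α * nW q ≤ b v q)
    (Δt : ℝ) (hΔt : 0 < Δt)
    (u : V) (p : W)
    (h1 : ∀ v, a u v - b v p = 0)
    (h2 : ∀ q, -b u q - Δt * c p q = 0) :
    u = 0 ∧ p = 0 := by
  have h1u := h1 u
  have h2p := h2 p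
  rw [ha, hc] at *
  -- nV u ^2 + Δt * nWsemi p ^2 = 0
  have hsum : nV u ^ 2 + Δt * nWsemi p ^ 2 = 0 := by linarith
  have hu2 : nV u ^ 2 = 0 := by nlinarith [sq_nonneg (nV u), sq_nonneg (nWsemi p)]
  have hu : u = 0 := hnV_norm u (by nlinarith [hnV_nonneg u])
  subst hu
  have hbp : ∀ v : V, b v p = 0 := by
    intro v
    have := h1 v
    simp at this ⊢
    linarith [this]
  obtain ⟨v, _, hv⟩ := hinfsup p
  rw [hbp v] at hv
  have : nW p = 0 := le_antisymm (by nlinarith) (hnW_nonneg p)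
  exact ⟨rfl, hnW_norm p this⟩
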